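/- Assume R is a local integral domain that is not a field, with principal maximal ideal 𝔪 = (p), and let I be a thick ideal of C_R all of whose objects are k-negligible. Then for X ∈ I, every a ∈ 𝔪·End_{C_R}(X) satisfies Tr^{(k)}_X(a) ∈ 𝔪; hence setting t̄_X(ā) := Tr^{(k)}_X(a) mod 𝔪 for a lift a of ā ∈ End_C(X) gives a well-defined k-linear family of maps on the mod-𝔪 evaluation C, which is a trace on the image of I in C. Moreover, if X ∈ N_k but X ∉ N_{k+1}, then t̄_X is a nonzero function on End_C(X). -/

import Mathlib

/-!
STATEMENT 4. Assume `R` is a local integral domain that is not a field, with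
principal maximal ideal `𝔪 = (p)`, and `I` a thick ideal of `C_R` all of whose
objects are `k`-negligible.  Then for `X ∈ I`, every `a ∈ 𝔪·End_{C_R}(X)` satisfies
`Tr^{(k)}_X(a) ∈ 𝔪`; hence setting `t̄_X(ā) := Tr^{(k)}_X(a) mod 𝔪` for a lift `a`
of `ā ∈ End_C(X)` gives a well-defined `k`-linear family of maps on the mod-`𝔪`
evaluation `C` (whose Hom spaces are `Hom_{C_R} ⊗ R/𝔪`), which is a trace on the
image of `I` in `C`.  Moreover, if `X ∈ N_k` but `X ∉ N_{k+1}`, then `t̄_X` is a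
nonzero function on `End_C(X)`.
(`Tr^{(k)}_X` is encoded as a linear family `t` with `p^k · t = Tr`.)
-/

open CategoryTheory MonoidalCategory

/-- A rigid spherical monoidal `R`-linear category, encoded through its spherical
trace functions on endomorphisms and their standard properties. -/
structure SphericalTraceData (R : Type*) [CommRing R] (C : Type*) [Category C]
    [MonoidalCategory C] [Preadditive C] [Linear R C] where
  /-- the spherical trace of an endomorphism, an `R`-linear function -/
  tr : ∀ X : C, (X ⟶ X) →ₗ[R] R
  /-- cyclicity of the trace -/
  tr_comm : ∀ {X Y : C} (f : X ⟶ Y) (g : Y ⟶ X), tr X (f ≫ g) = tr Y (g ≫ f)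
  /-- `End (𝟙_ C) = R` -/
  tr_unit : ∀ f : 𝟙_ C ⟶ 𝟙_ C, f = tr (𝟙_ C) f • 𝟙 (𝟙_ C)
  /-- multiplicativity of the trace on tensor products -/
  tr_tensor : ∀ {X Y : C} (a : X ⟶ X) (b : Y ⟶ Y),
      tr (X ⊗ Y) (a ⊗ₘ b) = tr X a * tr Y b
  /-- the partial trace (conditional expectation) onto the first factor -/
  E : ∀ X Y : C, (X ⊗ Y ⟶ X ⊗ Y) →ₗ[R] (X ⟶ X)
  tr_E : ∀ {X Y : C} (a : X ⊗ Y ⟶ X ⊗ Y), tr X (E X Y a) = tr (X ⊗ Y) a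
  /-- the partial trace (conditional expectation) onto the second factor -/
  E' : ∀ X Y : C, (X ⊗ Y ⟶ X ⊗ Y) →ₗ[R] (Y ⟶ Y)
  tr_E' : ∀ {X Y : C} (a : X ⊗ Y ⟶ X ⊗ Y), tr Y (E' X Y a) = tr (X ⊗ Y) a
  /-- rigidity/sphericality: a trace against a tensor product morphism `f ⊗ g`
  can be rewritten as a trace against `f` alone (Barrett–Westbury) -/
  tensorHom_trace_right : ∀ {X Y W Z : C} (f : X ⟶ Y) (g : W ⟶ Z) (h : Y ⊗ Z ⟶ X ⊗ W),
      ∃ h' : Y ⟶ X, tr (X ⊗ W) ((f ⊗ₘ g) ≫ h) = tr X (f ≫ h')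
  tensorHom_trace_left : ∀ {X Y W Z : C} (f : X ⟶ Y) (g : W ⟶ Z) (h : Z ⊗ Y ⟶ W ⊗ X),
      ∃ h' : Y ⟶ X, tr (W ⊗ X) ((g ⊗ₘ f) ≫ h) = tr X (f ≫ h')

/-- A thick (tensor) ideal of a monoidal category: a class of objects closed under
tensoring with arbitrary objects on either side and under retracts. -/
structure IsThickIdeal {C : Type*} [Category C] [MonoidalCategory C] (I : Set C) : Prop where
  tensor_right : ∀ X ∈ I, ∀ Y : C, X ⊗ Y ∈ I
  tensor_left : ∀ X ∈ I, ∀ Y : C, Y ⊗ X ∈ I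
  retract : ∀ {X Y : C}, Y ∈ I → ∀ (α : X ⟶ Y) (β : Y ⟶ X), α ≫ β = 𝟙 X → X ∈ I

variable {R : Type*} [CommRing R] {C : Type*} [Category C] [MonoidalCategory C]
  [Preadditive C] [Linear R C]

/-- An object `X` is `I`-negligible if `Tr_X a ∈ I` for every endomorphism `a` of `X`. -/
def IsNegligibleObj (Θ : SphericalTraceData R C) (I : Ideal R) (X : C) : Prop :=
  ∀ a : X ⟶ X, Θ.tr X a ∈ I

/-!
Since `𝔪 = (p)` with `p ≠ 0` in a domain, `p ^ k * x ∈ 𝔪 ^ (k + 1)` exactly when `x ∈ 𝔪`, so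
`Tr^(k)_X a ∈ 𝔪` exactly when `Tr_X a ∈ 𝔪 ^ (k + 1)`. For `a ∈ 𝔪 · End(X)` the trace lies in
`𝔪 · 𝔪 ^ k` by `k`-negligibility, which gives well-definedness; the trace axioms hold already
over `R` because `p ^ k` is not a zero divisor and they hold for `Tr`; and `X ∉ N_{k+1}` provides
an `a` with `Tr_X a ∉ 𝔪 ^ (k + 1)`.
-/

theorem IsLocalRing.ne_zero_of_maximalIdeal_eq_span [IsLocalRing R] (hR : ¬ IsField R) {p : R}
    (hp : IsLocalRing.maximalIdeal R = Ideal.span {p}) : p ≠ 0 := by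
  rintro rfl
  exact hR (IsLocalRing.isField_iff_maximalIdeal_eq.2 (hp.trans Ideal.span_singleton_zero))

theorem Ideal.pow_mul_mem_span_pow_succ_iff [IsDomain R] {p : R} (hp : p ≠ 0) (k : ℕ) (x : R) :
    p ^ k * x ∈ Ideal.span {p} ^ (k + 1) ↔ x ∈ Ideal.span {p} := by
  rw [Ideal.span_singleton_pow, Ideal.mem_span_singleton, Ideal.mem_span_singleton, pow_succ,
    mul_dvd_mul_iff_left (pow_ne_zero k hp)]

theorem LinearMap.mem_mul_of_mem_smul_top {M : Type*} [AddCommGroup M] [Module R M]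
    (f : M →ₗ[R] R) {J : Ideal R} (hf : ∀ x, f x ∈ J) (I : Ideal R) {x : M}
    (hx : x ∈ (I • ⊤ : Submodule R M)) : f x ∈ I * J := by
  have hrange : (⊤ : Submodule R M).map f ≤ J := by
    rintro _ ⟨y, -, rfl⟩
    exact hf y
  have hfx : f x ∈ (I • ⊤ : Submodule R M).map f := Submodule.mem_map_of_mem hx
  rw [Submodule.map_smul''] at hfx
  exact Submodule.smul_mono le_rfl hrange hfx

theorem modifiedTrace_descends [IsLocalRing R] [IsDomain R] (hR : ¬ IsField R)
    (p : R) (hp : IsLocalRing.maximalIdeal R = Ideal.span {p})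
    (Θ : SphericalTraceData R C) (k : ℕ)
    (I : Set C) (hI : IsThickIdeal I)
    (hneg : ∀ X ∈ I, IsNegligibleObj Θ ((IsLocalRing.maximalIdeal R) ^ k) X)
    (t : ∀ X : C, X ∈ I → ((X ⟶ X) →ₗ[R] R))
    (ht : ∀ (X : C) (hX : X ∈ I) (a : X ⟶ X), p ^ k * t X hX a = Θ.tr X a) :
    -- `Tr^(k)` sends `𝔪·End(X)` into `𝔪` ...
    (∀ (X : C) (hX : X ∈ I),
        ∀ a ∈ (IsLocalRing.maximalIdeal R • ⊤ : Submodule R (X ⟶ X)),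
          t X hX a ∈ IsLocalRing.maximalIdeal R) ∧
    -- ... hence its reduction mod `𝔪` is well defined on
    -- `End_C(X) = End_{C_R}(X)/𝔪·End_{C_R}(X)` ...
    (∀ (X : C) (hX : X ∈ I) (a a' : X ⟶ X),
        a - a' ∈ (IsLocalRing.maximalIdeal R • ⊤ : Submodule R (X ⟶ X)) →
          Ideal.Quotient.mk (IsLocalRing.maximalIdeal R) (t X hX a) =
            Ideal.Quotient.mk (IsLocalRing.maximalIdeal R) (t X hX a')) ∧
    -- ... and the reduced family is a trace on the image of `I` in `C`:
    -- (1) compatibility with the partial trace, mod 𝔪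
    (∀ (U : C) (hU : U ∈ I) (W : C) (f : U ⊗ W ⟶ U ⊗ W),
        Ideal.Quotient.mk (IsLocalRing.maximalIdeal R) (t (U ⊗ W) (hI.tensor_right U hU W) f) =
          Ideal.Quotient.mk (IsLocalRing.maximalIdeal R) (t U hU (Θ.E U W f))) ∧
    -- (2) cyclicity, mod 𝔪
    (∀ (U V : C) (hU : U ∈ I) (hV : V ∈ I) (f : V ⟶ U) (g : U ⟶ V),
        Ideal.Quotient.mk (IsLocalRing.maximalIdeal R) (t V hV (f ≫ g)) =
          Ideal.Quotient.mk (IsLocalRing.maximalIdeal R) (t U hU (g ≫ f))) ∧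
    -- nontriviality: if `X ∈ N_k ∖ N_{k+1}` then the reduced trace is nonzero on `End_C(X)`
    (∀ (X : C) (hX : X ∈ I),
        ¬ IsNegligibleObj Θ ((IsLocalRing.maximalIdeal R) ^ (k + 1)) X →
          ∃ a : X ⟶ X, t X hX a ∉ IsLocalRing.maximalIdeal R) := by
  set 𝔪 := IsLocalRing.maximalIdeal R
  have hp0 : p ≠ 0 := IsLocalRing.ne_zero_of_maximalIdeal_eq_span hR hp
  have t_mem_iff : ∀ X hX a, t X hX a ∈ 𝔪 ↔ Θ.tr X a ∈ 𝔪 ^ (k + 1) := fun X hX a => by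
    rw [← ht X hX a, hp, Ideal.pow_mul_mem_span_pow_succ_iff hp0]
  have t_eq_of_tr_eq : ∀ X hX Y hY (a : X ⟶ X) (b : Y ⟶ Y),
      Θ.tr X a = Θ.tr Y b → t X hX a = t Y hY b := fun X hX Y hY a b h =>
    mul_left_cancel₀ (pow_ne_zero k hp0) (by rw [ht, ht, h])
  have t_mem_of_mem_smul_top : ∀ X hX, ∀ a ∈ (𝔪 • ⊤ : Submodule R (X ⟶ X)), t X hX a ∈ 𝔪 :=
    fun X hX a ha => (t_mem_iff X hX a).2 <| by
      rw [pow_succ']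
      exact (Θ.tr X).mem_mul_of_mem_smul_top (hneg X hX) 𝔪 ha
  refine ⟨t_mem_of_mem_smul_top, ?_, ?_, ?_, ?_⟩
  · intro X hX a a' h
    rw [Ideal.Quotient.mk_eq_mk_iff_sub_mem, ← map_sub]
    exact t_mem_of_mem_smul_top X hX _ h
  · exact fun U hU W f => congrArg _ (t_eq_of_tr_eq _ _ _ _ _ _ (Θ.tr_E f).symm)
  · exact fun U V hU hV f g => congrArg _ (t_eq_of_tr_eq _ _ _ _ _ _ (Θ.tr_comm f g))
  · intro X hX hX'
    obtain ⟨a, ha⟩ := not_forall.1 hX'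
    exact ⟨a, fun h => ha ((t_mem_iff X hX a).1 h)⟩
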